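/- arXiv:1810.06973 — 5 statements merged into one kernel-verified Lean document; each statement's English description precedes it below -/
import Mathlib

section
/- With θ_min as above (α > 0, γ ∈ (0,1), p, μ ∈ [0,1], 0 < L < M real), for every fixed x ∈ (0,1) the partial derivative of θ_min with respect to L is ≤ 0; it equals −(αγ(1-γ)M/(L(M-L)))·(x(1-x)/(L(M-L)))^α · [ pμ/(γ(x/L)^α + (1-γ)((1-x)/(M-L))^α)² + (1-p)(1-μ)/((1-γ)(x/L)^α + γ((1-x)/(M-L))^α)² ]. -/
open Real Set

noncomputable def thetaMin (M L p mu gam alp x : ℝ) : ℝ :=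
  if x = 0 then p * (1 - mu)
  else if x = 1 then p + (1 - p) * (1 - mu)
  else p * (1 - mu)
    + p * mu * (gam * (x / L) ^ alp)
        / (gam * (x / L) ^ alp + (1 - gam) * ((1 - x) / (M - L)) ^ alp)
    + (1 - p) * (1 - mu) * ((1 - gam) * (x / L) ^ alp)
        / ((1 - gam) * (x / L) ^ alp + gam * ((1 - x) / (M - L)) ^ alp)

noncomputable def thetaMaj (M L p mu gam alp y : ℝ) : ℝ :=
  if y = 0 then p * mu
  else if y = 1 then p + (1 - p) * mu
  else p * mu
    + p * (1 - mu) * (gam * (y / L) ^ alp)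
        / (gam * (y / L) ^ alp + (1 - gam) * ((1 - y) / (M - L)) ^ alp)
    + (1 - p) * mu * ((1 - gam) * (y / L) ^ alp)
        / ((1 - gam) * (y / L) ^ alp + gam * ((1 - y) / (M - L)) ^ alp)

/-!
Both fractions in `thetaMin` are shares `c u / (c u + d v)` with `u = (x/L)^α` and
`v = ((1-x)/(M-L))^α`. By the quotient rule such a share has derivative
`c d (u' v - u v') / (c u + d v)²`, and since `u' = -α u / L`, `v' = α v / (M - L)`, the
cross term `u' v - u v' = -α M u v / (L (M - L))` is negative.
-/

lemma hasDerivAt_div_rpow {a t : ℝ} (α : ℝ) (ha : a ≠ 0) (ht : t ≠ 0) :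
    HasDerivAt (fun s => (a / s) ^ α) (-(α * (a / t) ^ α / t)) t := by
  have hat : a / t ≠ 0 := div_ne_zero ha ht
  have hdiv : HasDerivAt (fun s => a / s) (-(a / t ^ 2)) t := by
    simpa [div_eq_mul_inv, ← neg_mul_eq_mul_neg] using (hasDerivAt_inv ht).const_mul a
  convert hdiv.rpow_const (p := α) (Or.inl hat) using 1
  rw [rpow_sub_one hat]
  field_simp

lemma hasDerivAt_div_const_sub_rpow {b M t : ℝ} (α : ℝ) (hb : b ≠ 0) (ht : M - t ≠ 0) :
    HasDerivAt (fun s => (b / (M - s)) ^ α) (α * (b / (M - t)) ^ α / (M - t)) t := by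
  simpa using (hasDerivAt_div_rpow α hb ht).comp_const_sub M t

lemma HasDerivAt.weighted_share {f g : ℝ → ℝ} {f' g' c d t : ℝ} (hf : HasDerivAt f f' t)
    (hg : HasDerivAt g g' t) (h : c * f t + d * g t ≠ 0) :
    HasDerivAt (fun s => c * f s / (c * f s + d * g s))
      (c * d * (f' * g t - f t * g') / (c * f t + d * g t) ^ 2) t :=
  ((hf.const_mul c).div ((hf.const_mul c).add (hg.const_mul d)) h).congr_deriv
    (by simp only [Pi.add_apply]; ring)

lemma div_rpow_cross_term {a b M L : ℝ} (α : ℝ) (ha : 0 ≤ a) (hb : 0 ≤ b) (hL : 0 < L)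
    (hLM : L < M) :
    -(α * (a / L) ^ α / L) * (b / (M - L)) ^ α - (a / L) ^ α * (α * (b / (M - L)) ^ α / (M - L))
      = -(α * M / (L * (M - L))) * (a * b / (L * (M - L))) ^ α := by
  have hML : 0 < M - L := sub_pos.mpr hLM
  rw [← div_mul_div_comm a, mul_rpow (div_nonneg ha hL.le) (div_nonneg hb hML.le)]
  field_simp
  ring

lemma thetaMin_of_mem_Ioo {M p mu gam alp x : ℝ} (hx : x ∈ Ioo (0 : ℝ) 1) :
    (fun L => thetaMin M L p mu gam alp x) = fun L => p * (1 - mu)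
      + p * mu * (gam * (x / L) ^ alp
          / (gam * (x / L) ^ alp + (1 - gam) * ((1 - x) / (M - L)) ^ alp))
      + (1 - p) * (1 - mu) * ((1 - gam) * (x / L) ^ alp
          / ((1 - gam) * (x / L) ^ alp + gam * ((1 - x) / (M - L)) ^ alp)) := by
  funext L
  simp [thetaMin, hx.1.ne', hx.2.ne, mul_div_assoc]

theorem stmt2_general (M L p mu gam alp x : ℝ)
    (hL : 0 < L) (hLM : L < M)
    (hp : p ∈ Icc (0:ℝ) 1) (hmu : mu ∈ Icc (0:ℝ) 1)
    (hgam : gam ∈ Ioo (0:ℝ) 1) (halp : 0 < alp) (hx : x ∈ Ioo (0:ℝ) 1) :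
    HasDerivAt (fun L' => thetaMin M L' p mu gam alp x)
      (-(alp * gam * (1 - gam) * M / (L * (M - L))) * ((x * (1 - x) / (L * (M - L))) ^ alp) *
        (p * mu / (gam * (x / L) ^ alp + (1 - gam) * ((1 - x) / (M - L)) ^ alp) ^ 2
          + (1 - p) * (1 - mu) / ((1 - gam) * (x / L) ^ alp + gam * ((1 - x) / (M - L)) ^ alp) ^ 2)) L
    ∧
    (-(alp * gam * (1 - gam) * M / (L * (M - L))) * ((x * (1 - x) / (L * (M - L))) ^ alp) *
        (p * mu / (gam * (x / L) ^ alp + (1 - gam) * ((1 - x) / (M - L)) ^ alp) ^ 2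
          + (1 - p) * (1 - mu) / ((1 - gam) * (x / L) ^ alp + gam * ((1 - x) / (M - L)) ^ alp) ^ 2)) ≤ 0 := by
  have hML : 0 < M - L := sub_pos.mpr hLM
  have hgam' : 0 < 1 - gam := sub_pos.mpr hgam.2
  have hu : 0 < (x / L) ^ alp := rpow_pos_of_pos (div_pos hx.1 hL) alp
  have hv : 0 < ((1 - x) / (M - L)) ^ alp := rpow_pos_of_pos (div_pos (sub_pos.mpr hx.2) hML) alp
  have hU := hasDerivAt_div_rpow alp hx.1.ne' hL.ne'
  have hV := hasDerivAt_div_const_sub_rpow alp (sub_pos.mpr hx.2).ne' hML.ne'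
  have hshare₁ := hU.weighted_share hV (add_pos (mul_pos hgam.1 hu) (mul_pos hgam' hv)).ne'
  have hshare₂ := hU.weighted_share hV (add_pos (mul_pos hgam' hu) (mul_pos hgam.1 hv)).ne'
  rw [div_rpow_cross_term alp hx.1.le (sub_nonneg.mpr hx.2.le) hL hLM] at hshare₁ hshare₂
  constructor
  · rw [thetaMin_of_mem_Ioo hx]
    exact (((hasDerivAt_const L (p * (1 - mu))).add (hshare₁.const_mul (p * mu))).add
      (hshare₂.const_mul ((1 - p) * (1 - mu)))).congr_deriv (by ring)
  · have hK : 0 ≤ alp * gam * (1 - gam) * M / (L * (M - L)) :=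
      (div_pos (mul_pos (mul_pos (mul_pos halp hgam.1) hgam') (hL.trans hLM)) (mul_pos hL hML)).le
    have hw₁ : 0 ≤ p * mu := mul_nonneg hp.1 hmu.1
    have hw₂ : 0 ≤ (1 - p) * (1 - mu) := mul_nonneg (sub_nonneg.mpr hp.2) (sub_nonneg.mpr hmu.2)
    have hR : 0 ≤ (x * (1 - x) / (L * (M - L))) ^ alp :=
      rpow_nonneg (div_pos (mul_pos hx.1 (sub_pos.mpr hx.2)) (mul_pos hL hML)).le _
    rw [neg_mul, neg_mul, neg_nonpos]
    exact mul_nonneg (mul_nonneg hK hR)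
      (add_nonneg (div_nonneg hw₁ (sq_nonneg _)) (div_nonneg hw₂ (sq_nonneg _)))

theorem stmt2 (M L p mu gam alp x : ℝ)
    (hM : 0 < M) (hL : 0 < L) (hLM : L < M)
    (hp : p ∈ Icc (0:ℝ) 1) (hmu : mu ∈ Icc (0:ℝ) 1)
    (hgam : gam ∈ Ioo (0:ℝ) 1) (halp : 0 < alp) (hx : x ∈ Ioo (0:ℝ) 1) :
    HasDerivAt (fun L' => thetaMin M L' p mu gam alp x)
      (-(alp * gam * (1 - gam) * M / (L * (M - L))) * ((x * (1 - x) / (L * (M - L))) ^ alp) *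
        (p * mu / (gam * (x / L) ^ alp + (1 - gam) * ((1 - x) / (M - L)) ^ alp) ^ 2
          + (1 - p) * (1 - mu) / ((1 - gam) * (x / L) ^ alp + gam * ((1 - x) / (M - L)) ^ alp) ^ 2)) L
    ∧
    (-(alp * gam * (1 - gam) * M / (L * (M - L))) * ((x * (1 - x) / (L * (M - L))) ^ alp) *
        (p * mu / (gam * (x / L) ^ alp + (1 - gam) * ((1 - x) / (M - L)) ^ alp) ^ 2
          + (1 - p) * (1 - mu) / ((1 - gam) * (x / L) ^ alp + gam * ((1 - x) / (M - L)) ^ alp) ^ 2)) ≤ 0 :=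
  stmt2_general M L p mu gam alp x hL hLM hp hmu hgam halp hx
end

section
/- Fix α > 0, γ ∈ (0,1), μ ∈ [0,1], 0 < L < M, and x ∈ (0,1). Then the partial derivative of θ_min(x) with respect to p equals (1-μ)·(1 − (1-γ)(x/L)^α/(γ((1-x)/(M-L))^α + (1-γ)(x/L)^α)) + μ·γ(x/L)^α/(γ(x/L)^α + (1-γ)((1-x)/(M-L))^α), and this quantity is ≥ 0. Similarly ∂θ_maj/∂p ≥ 0. -/
open Real Set

/-! Away from the endpoints `x = 0, 1`, θ is affine in `p`, so its derivative is its slope, and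
the slope is a combination, with nonnegative coefficients `μ` and `1 - μ`, of a posterior weight
`u / (u + z)` and a complementary weight `1 - v / (w + v)`, both in `[0, 1]`. -/

section Mixture

variable (c₁ c₂ u v w z : ℝ)

-- The two orders `v + w` and `w + v` are those in which the statement writes the denominator.
theorem hasDerivAt_mixture (p : ℝ) :
    HasDerivAt (fun p' => p' * c₁ + p' * c₂ * u / (u + z) + (1 - p') * c₁ * v / (v + w))
      (c₁ * (1 - v / (w + v)) + c₂ * u / (u + z)) p := by
  have affine : (fun p' => p' * c₁ + p' * c₂ * u / (u + z) + (1 - p') * c₁ * v / (v + w)) =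
      fun p' => p' * (c₁ * (1 - v / (w + v)) + c₂ * u / (u + z)) + c₁ * v / (v + w) := by
    funext p'
    rw [add_comm w v]
    ring
  rw [affine]
  exact (hasDerivAt_mul_const _).add_const _

variable {c₁ c₂ u v w z}

theorem mixture_deriv_nonneg (hc₁ : 0 ≤ c₁) (hc₂ : 0 ≤ c₂) (hu : 0 ≤ u) (hv : 0 ≤ v)
    (hw : 0 ≤ w) (hz : 0 ≤ z) :
    0 ≤ c₁ * (1 - v / (w + v)) + c₂ * u / (u + z) := by
  have hvw : v / (w + v) ≤ 1 := div_le_one_of_le₀ (le_add_of_nonneg_left hw) (by positivity)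
  have : 0 ≤ c₁ * (1 - v / (w + v)) := mul_nonneg hc₁ (sub_nonneg.mpr hvw)
  positivity

end Mixture

theorem stmt5_general (M L p mu gam alp x y : ℝ)
    (hL : 0 < L) (hLM : L < M)
    (hmu : mu ∈ Icc (0:ℝ) 1)
    (hgam : gam ∈ Ioo (0:ℝ) 1)
    (hx : x ∈ Ioo (0:ℝ) 1) (hy : y ∈ Ioo (0:ℝ) 1) :
    (HasDerivAt (fun p' => thetaMin M L p' mu gam alp x)
      ((1 - mu) * (1 - ((1 - gam) * (x / L) ^ alp)
          / (gam * ((1 - x) / (M - L)) ^ alp + (1 - gam) * (x / L) ^ alp))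
        + mu * (gam * (x / L) ^ alp)
          / (gam * (x / L) ^ alp + (1 - gam) * ((1 - x) / (M - L)) ^ alp)) p) ∧
    0 ≤ ((1 - mu) * (1 - ((1 - gam) * (x / L) ^ alp)
          / (gam * ((1 - x) / (M - L)) ^ alp + (1 - gam) * (x / L) ^ alp))
        + mu * (gam * (x / L) ^ alp)
          / (gam * (x / L) ^ alp + (1 - gam) * ((1 - x) / (M - L)) ^ alp)) ∧
    ∃ F : ℝ, HasDerivAt (fun p' => thetaMaj M L p' mu gam alp y) F p ∧ 0 ≤ F := by
  have weights_nonneg : ∀ t ∈ Ioo (0:ℝ) 1,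
      0 ≤ gam * (t / L) ^ alp ∧ 0 ≤ (1 - gam) * (t / L) ^ alp ∧
      0 ≤ gam * ((1 - t) / (M - L)) ^ alp ∧ 0 ≤ (1 - gam) * ((1 - t) / (M - L)) ^ alp := by
    intro t ht
    have hX := rpow_nonneg (div_nonneg ht.1.le hL.le) alp
    have hZ := rpow_nonneg (div_nonneg (sub_nonneg.mpr ht.2.le) (sub_nonneg.mpr hLM.le)) alp
    have hg := sub_nonneg.mpr hgam.2.le
    exact ⟨mul_nonneg hgam.1.le hX, mul_nonneg hg hX, mul_nonneg hgam.1.le hZ, mul_nonneg hg hZ⟩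
  obtain ⟨hgX, hgX', hgZ, hgZ'⟩ := weights_nonneg x hx
  obtain ⟨hgY, hgY', hgW, hgW'⟩ := weights_nonneg y hy
  have hmu' := sub_nonneg.mpr hmu.2
  refine ⟨?_, mixture_deriv_nonneg hmu' hmu.1 hgX hgX' hgZ hgZ', _, ?_,
    mixture_deriv_nonneg hmu.1 hmu' hgY hgY' hgW hgW'⟩
  · simpa only [thetaMin, if_neg hx.1.ne', if_neg hx.2.ne] using hasDerivAt_mixture _ _ _ _ _ _ p
  · simpa only [thetaMaj, if_neg hy.1.ne', if_neg hy.2.ne] using hasDerivAt_mixture _ _ _ _ _ _ p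

theorem stmt5 (M L p mu gam alp x y : ℝ)
    (hM : 0 < M) (hL : 0 < L) (hLM : L < M)
    (hp : p ∈ Icc (0:ℝ) 1) (hmu : mu ∈ Icc (0:ℝ) 1)
    (hgam : gam ∈ Ioo (0:ℝ) 1) (halp : 0 < alp)
    (hx : x ∈ Ioo (0:ℝ) 1) (hy : y ∈ Ioo (0:ℝ) 1) :
    (HasDerivAt (fun p' => thetaMin M L p' mu gam alp x)
      ((1 - mu) * (1 - ((1 - gam) * (x / L) ^ alp)
          / (gam * ((1 - x) / (M - L)) ^ alp + (1 - gam) * (x / L) ^ alp))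
        + mu * (gam * (x / L) ^ alp)
          / (gam * (x / L) ^ alp + (1 - gam) * ((1 - x) / (M - L)) ^ alp)) p) ∧
    0 ≤ ((1 - mu) * (1 - ((1 - gam) * (x / L) ^ alp)
          / (gam * ((1 - x) / (M - L)) ^ alp + (1 - gam) * (x / L) ^ alp))
        + mu * (gam * (x / L) ^ alp)
          / (gam * (x / L) ^ alp + (1 - gam) * ((1 - x) / (M - L)) ^ alp)) ∧
    ∃ F : ℝ, HasDerivAt (fun p' => thetaMaj M L p' mu gam alp y) F p ∧ 0 ≤ F :=
  stmt5_general M L p mu gam alp x y hL hLM hmu hgam hx hy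
end

section
/- Let α = 1 and μ = 1, with 0 < γ < 1, 1/2 < p < 1, M > 0 and 0 < L < M real. If L > (1-γ)M/(1 − γp), then y* = γpL/(L − (1-γ)M) satisfies θ_maj(y*) = y*, where θ_maj(y) = p + (1-p)·(1-γ)(y/L)/((1-γ)(y/L) + γ(1-y)/(M-L)), and 0 ≤ y* ≤ 1. If instead (M+1)/2 ≤ L ≤ (1-γ)M/(1 − γp), then y* = 1 is a fixed point of θ_maj. -/
open Real Set

/-!
At `y*` the denominator of `θ_maj` collapses to `γ (1 - p) / (M - L)`, after which the fixed-point
equation is linear in `y*` and reduces to `y* (L - (1 - γ) M) = γ p L`. At `y = 1` the second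
summand of the denominator vanishes, so `θ_maj 1 = p + (1 - p) = 1`.
-/

/-- `θ_maj` of the paper for `μ = 1`, as a function of the ranking probability `y`. -/
noncomputable def majorityMap (M L p gam y : ℝ) : ℝ :=
  p + (1 - p) * ((1 - gam) * (y / L)) / ((1 - gam) * (y / L) + gam * ((1 - y) / (M - L)))

/-- `y*` of the paper. -/
noncomputable def interiorFixedPoint (M L p gam : ℝ) : ℝ :=
  gam * p * L / (L - (1 - gam) * M)

section

variable {M L p gam : ℝ}

theorem majorityMap_one (hL : L ≠ 0) (hgam : gam ≠ 1) : majorityMap M L p gam 1 = 1 := by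
  have hweight : (1 - gam) * (1 / L) ≠ 0 := mul_ne_zero (sub_ne_zero.mpr hgam.symm) (by simpa)
  simp only [majorityMap, sub_self, zero_div, mul_zero, add_zero, mul_div_assoc,
    div_self hweight]
  ring

theorem majorityMap_denom_interiorFixedPoint (hL : L ≠ 0) (hLM : M - L ≠ 0)
    (hD : L - (1 - gam) * M ≠ 0) :
    (1 - gam) * (interiorFixedPoint M L p gam / L)
        + gam * ((1 - interiorFixedPoint M L p gam) / (M - L))
      = gam * (1 - p) / (M - L) := by
  unfold interiorFixedPoint
  field_simp
  ring

theorem majorityMap_interiorFixedPoint (hL : L ≠ 0) (hLM : M - L ≠ 0)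
    (hD : L - (1 - gam) * M ≠ 0) (hgam : gam ≠ 0) (hp : p ≠ 1) :
    majorityMap M L p gam (interiorFixedPoint M L p gam) = interiorFixedPoint M L p gam := by
  have hp' : 1 - p ≠ 0 := sub_ne_zero.mpr hp.symm
  rw [majorityMap, majorityMap_denom_interiorFixedPoint hL hLM hD]
  unfold interiorFixedPoint
  field_simp
  ring

theorem interiorFixedPoint_mem_Icc (hgam : 0 ≤ gam) (hp : 0 ≤ p) (hL : 0 ≤ L)
    (hlarge : (1 - gam) * M < L * (1 - gam * p)) :
    interiorFixedPoint M L p gam ∈ Icc 0 1 := by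
  have hnum : 0 ≤ gam * p * L := by positivity
  have hnum_lt : gam * p * L < L - (1 - gam) * M := by linarith
  exact ⟨div_nonneg hnum (by linarith), div_le_one_of_le₀ hnum_lt.le (by linarith)⟩

end

theorem stmt8_general (M L p gam : ℝ) (hL : 0 < L) (hLM : L < M)
    (hgam : gam ∈ Ioo (0:ℝ) 1) (hp : p ∈ Ioo (1/2 : ℝ) 1) :
    (L > (1 - gam) * M / (1 - gam * p) →
      (p + (1 - p) * ((1 - gam) * ((gam * p * L / (L - (1 - gam) * M)) / L))
          / ((1 - gam) * ((gam * p * L / (L - (1 - gam) * M)) / L)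
            + gam * ((1 - gam * p * L / (L - (1 - gam) * M)) / (M - L)))
        = gam * p * L / (L - (1 - gam) * M)) ∧
      0 ≤ gam * p * L / (L - (1 - gam) * M) ∧
      gam * p * L / (L - (1 - gam) * M) ≤ 1) ∧
    ((M + 1) / 2 ≤ L → L ≤ (1 - gam) * M / (1 - gam * p) →
      p + (1 - p) * ((1 - gam) * ((1:ℝ) / L))
          / ((1 - gam) * ((1:ℝ) / L) + gam * ((1 - (1:ℝ)) / (M - L))) = 1) := by
  obtain ⟨hgam0, hgam1⟩ := hgam
  obtain ⟨hp0, hp1⟩ := hp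
  refine ⟨fun hlarge => ?_, fun _ _ => majorityMap_one hL.ne' hgam1.ne⟩
  have hlarge' : (1 - gam) * M < L * (1 - gam * p) :=
    (div_lt_iff₀ (by nlinarith)).mp hlarge
  have hmem := interiorFixedPoint_mem_Icc hgam0.le (by linarith) hL.le hlarge'
  have hD : L - (1 - gam) * M ≠ 0 := by
    have : 0 < gam * p * L := mul_pos (mul_pos hgam0 (by linarith)) hL
    linarith
  exact ⟨majorityMap_interiorFixedPoint hL.ne' (sub_ne_zero.mpr hLM.ne') hD hgam0.ne' hp1.ne,
    hmem⟩

theorem stmt8 (M L p gam : ℝ) (hM : 0 < M) (hL : 0 < L) (hLM : L < M)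
    (hgam : gam ∈ Ioo (0:ℝ) 1) (hp : p ∈ Ioo (1/2 : ℝ) 1) :
    (L > (1 - gam) * M / (1 - gam * p) →
      (p + (1 - p) * ((1 - gam) * ((gam * p * L / (L - (1 - gam) * M)) / L))
          / ((1 - gam) * ((gam * p * L / (L - (1 - gam) * M)) / L)
            + gam * ((1 - gam * p * L / (L - (1 - gam) * M)) / (M - L)))
        = gam * p * L / (L - (1 - gam) * M)) ∧
      0 ≤ gam * p * L / (L - (1 - gam) * M) ∧
      gam * p * L / (L - (1 - gam) * M) ≤ 1) ∧
    ((M + 1) / 2 ≤ L → L ≤ (1 - gam) * M / (1 - gam * p) →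
      p + (1 - p) * ((1 - gam) * ((1:ℝ) / L))
          / ((1 - gam) * ((1:ℝ) / L) + gam * ((1 - (1:ℝ)) / (M - L))) = 1) :=
  stmt8_general M L p gam hL hLM hgam hp
end

section
/- Let q ∈ [1/2, 1] and let M be an odd positive integer. Let S ~ Binomial(M, q). Then P(S > M/2) ≥ q. -/
open Real Finset

/-!
Split the `M = 2m + 1` signals into the first `2m` and the last one. The majority of all `M` is
correct iff either the first `2m` already have a strict majority, or they tie and the last signal
is correct; comparing with `q = q · P(S_{2m} < m) + q · P(S_{2m} ≥ m)` leaves to show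
`q · P(S_{2m} < m) ≤ (1 - q) · P(S_{2m} > m)`. Under the reflection `k ↦ 2m - k` this holds term
by term, because `q^(k+1) (1-q)^(2m-k) ≤ q^(2m-k) (1-q)^(k+1)` once `k + 1 ≤ 2m - k` and `1 - q ≤ q`.
-/

/-- For `y = 1 - x` this is `P(S = k)` with `S ~ Binomial(n, x)`. -/
def binomTerm {R : Type*} [CommSemiring R] (x y : R) (n k : ℕ) : R :=
  n.choose k * x ^ k * y ^ (n - k)

section CommSemiring

variable {R : Type*} [CommSemiring R] (x y : R)

theorem sum_binomTerm (n : ℕ) : ∑ k ∈ range (n + 1), binomTerm x y n k = (x + y) ^ n := by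
  rw [add_pow]
  exact sum_congr rfl fun k _ => by rw [binomTerm]; ring

theorem binomTerm_succ_succ (n k : ℕ) :
    binomTerm x y (n + 1) (k + 1) = x * binomTerm x y n k + y * binomTerm x y n (k + 1) := by
  rcases lt_or_ge k n with hk | hk
  · obtain ⟨d, rfl⟩ := Nat.exists_eq_add_of_lt hk
    simp only [binomTerm, Nat.choose_succ_succ, Nat.cast_add,
      show k + d + 1 + 1 - (k + 1) = d + 1 by omega, show k + d + 1 - k = d + 1 by omega,
      show k + d + 1 - (k + 1) = d by omega]
    ring
  · simp only [binomTerm, Nat.choose_succ_succ, Nat.choose_eq_zero_of_lt (show n < k + 1 by omega),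
      Nat.sub_eq_zero_of_le hk, show n + 1 - (k + 1) = 0 by omega]
    push_cast
    ring

theorem binomTerm_self_succ (n : ℕ) : binomTerm x y n (n + 1) = 0 := by
  simp [binomTerm]

/-- Conditioning the upper tail of `n + 1` trials on the outcome of the last trial. -/
theorem sum_Ico_binomTerm_succ (n a : ℕ) (ha : a ≤ n) :
    ∑ k ∈ Ico (a + 1) (n + 2), binomTerm x y (n + 1) k =
      x * ∑ k ∈ Ico a (n + 1), binomTerm x y n k +
        y * ∑ k ∈ Ico (a + 1) (n + 1), binomTerm x y n k := by
  have hshift : ∑ k ∈ Ico a (n + 1), binomTerm x y n (k + 1) =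
      ∑ k ∈ Ico (a + 1) (n + 1), binomTerm x y n k := by
    rw [sum_Ico_add', sum_Ico_succ_top (by omega), binomTerm_self_succ, add_zero]
  rw [← sum_Ico_add', ← hshift, mul_sum, mul_sum, ← sum_add_distrib]
  exact sum_congr rfl fun k _ => binomTerm_succ_succ x y n k

end CommSemiring

theorem pow_mul_pow_le_pow_mul_pow {x y : ℝ} (hy : 0 ≤ y) (hyx : y ≤ x) {a b : ℕ} (hab : a ≤ b) :
    x ^ a * y ^ b ≤ x ^ b * y ^ a := by
  obtain ⟨c, rfl⟩ := Nat.exists_eq_add_of_le hab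
  have hx : 0 ≤ x := hy.trans hyx
  calc x ^ a * y ^ (a + c) = x ^ a * y ^ a * y ^ c := by ring
    _ ≤ x ^ a * y ^ a * x ^ c := by gcongr
    _ = x ^ (a + c) * y ^ a := by ring

theorem mul_sum_range_binomTerm_le {x y : ℝ} (hy : 0 ≤ y) (hyx : y ≤ x) {n m : ℕ}
    (hm : 2 * m ≤ n + 1) :
    x * ∑ k ∈ range m, binomTerm x y n k ≤
      y * ∑ k ∈ Ico (n + 1 - m) (n + 1), binomTerm x y n k := by
  have hreflect := sum_Ico_reflect (binomTerm x y n) 0 (show m ≤ n + 1 by omega)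
  rw [Nat.sub_zero] at hreflect
  rw [← hreflect, ← Nat.Ico_zero_eq_range, mul_sum, mul_sum]
  refine sum_le_sum fun k hk => ?_
  have hk_half : 2 * k + 1 ≤ n := by simp only [mem_Ico] at hk; omega
  have hpow := pow_mul_pow_le_pow_mul_pow hy hyx (show k + 1 ≤ n - k by omega)
  simp only [binomTerm, Nat.choose_symm (show k ≤ n by omega), Nat.sub_sub_self (show k ≤ n by omega)]
  calc x * (n.choose k * x ^ k * y ^ (n - k)) = n.choose k * (x ^ (k + 1) * y ^ (n - k)) := by ring
    _ ≤ n.choose k * (x ^ (n - k) * y ^ (k + 1)) := by gcongr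
    _ = y * (n.choose k * x ^ (n - k) * y ^ k) := by ring

theorem stmt13_general (q : ℝ) (M : ℕ) (hq : q ∈ Set.Icc (1/2 : ℝ) 1)
    (hModd : Odd M) :
    q ≤ ∑ k ∈ (Finset.range (M + 1)).filter (fun k => M < 2 * k),
          (M.choose k : ℝ) * q ^ k * (1 - q) ^ (M - k) := by
  obtain ⟨m, rfl⟩ := hModd
  obtain ⟨hq_half, hq_one⟩ := hq
  have hmajority : (range (2 * m + 1 + 1)).filter (fun k => 2 * m + 1 < 2 * k) =
      Ico (m + 1) (2 * m + 1 + 1) := by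
    ext k
    simp only [mem_filter, mem_range, mem_Ico]
    omega
  have htotal : ∑ k ∈ range m, binomTerm q (1 - q) (2 * m) k +
      ∑ k ∈ Ico m (2 * m + 1), binomTerm q (1 - q) (2 * m) k = 1 := by
    rw [sum_range_add_sum_Ico _ (by omega), sum_binomTerm]
    simp
  have htails := mul_sum_range_binomTerm_le (x := q) (y := 1 - q) (n := 2 * m) (m := m)
    (by linarith) (by linarith) (by omega)
  rw [show 2 * m + 1 - m = m + 1 by omega] at htails
  rw [hmajority]
  change q ≤ ∑ k ∈ Ico (m + 1) (2 * m + 1 + 1), binomTerm q (1 - q) (2 * m + 1) k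
  rw [sum_Ico_binomTerm_succ _ _ _ _ (by omega)]
  linear_combination htails - q * htotal

theorem stmt13 (q : ℝ) (M : ℕ) (hq : q ∈ Set.Icc (1/2 : ℝ) 1)
    (hModd : Odd M) (hMpos : 0 < M) :
    q ≤ ∑ k ∈ (Finset.range (M + 1)).filter (fun k => M < 2 * k),
          (M.choose k : ℝ) * q ^ k * (1 - q) ^ (M - k) :=
  stmt13_general q M hq hModd
end

section
/- Fix μ = 1, α = 1, 1/2 < p < 1, M > 0 and consider γ ∈ [0, γ̄] with γ̄ = 1/(p + (1-p)M). Then for every real L with (M+1)/2 ≤ L ≤ M−1, we have L ≤ (1-γ)M/(1 − γp); hence the majority fixed point equals y*_L = 1, i.e., θ_maj(1) = 1 where θ_maj(y) = p + (1-p)(1-γ)(y/L)/((1-γ)(y/L) + γ(1-y)/(M-L)). -/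
/-! Writing `d = p + (1 - p) M`, the threshold condition `γ d ≤ 1` together with `γ p ≤ 1`
and the identity `M - p L = d + p (M - 1 - L)` gives `γ (M - p L) ≤ M - L` whenever
`L ≤ M - 1`, which is the bound on `L`. At `y = 1` the minority term of `θ_maj` carries the
factor `1 - y = 0`, so `θ_maj 1 = p + (1 - p) = 1`. -/

open Set

/-- The map `θ_maj` of the majority websites, for `μ = α = 1`. -/
noncomputable def majorityUpdate (M L p gam y : ℝ) : ℝ :=
  p + (1 - p) * ((1 - gam) * (y / L)) / ((1 - gam) * (y / L) + gam * ((1 - y) / (M - L)))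

theorem majorityUpdate_one {M L p gam : ℝ} (hgam : gam ≠ 1) (hL : L ≠ 0) :
    majorityUpdate M L p gam 1 = 1 := by
  have hmaj : (1 - gam) * (1 / L) ≠ 0 := mul_ne_zero (sub_ne_zero.2 hgam.symm) (by simpa)
  simp only [majorityUpdate, sub_self, zero_div, mul_zero, add_zero, mul_div_assoc,
    div_self hmaj]
  ring

theorem one_lt_add_one_sub_mul {p M : ℝ} (hp : p < 1) (hM : 1 < M) : 1 < p + (1 - p) * M := by
  nlinarith

theorem le_mul_div_one_sub_mul_of_le_threshold {M L p gam : ℝ} (hgp : gam * p < 1)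
    (hgam : gam * (p + (1 - p) * M) ≤ 1) (hL : L ≤ M - 1) :
    L ≤ (1 - gam) * M / (1 - gam * p) := by
  rw [le_div_iff₀ (sub_pos.2 hgp)]
  nlinarith [mul_le_mul_of_nonneg_right hgp.le (sub_nonneg.2 hL)]

theorem stmt17_general (M p gam : ℝ) (hp : p ∈ Ioo (1/2 : ℝ) 1)
    (hgam : gam ∈ Icc (0:ℝ) (1 / (p + (1 - p) * M))) :
    ∀ L : ℝ, (M + 1) / 2 ≤ L → L ≤ M - 1 →
      L ≤ (1 - gam) * M / (1 - gam * p) ∧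
      p + (1 - p) * ((1 - gam) * ((1:ℝ) / L))
          / ((1 - gam) * ((1:ℝ) / L) + gam * ((1 - (1:ℝ)) / (M - L))) = 1 := by
  intro L hL₁ hL₂
  have hd : 1 < p + (1 - p) * M := one_lt_add_one_sub_mul hp.2 (by linarith)
  have hgam_lt : gam < 1 := hgam.2.trans_lt ((div_lt_one (by linarith)).2 hd)
  have hgp : gam * p < 1 := (mul_le_of_le_one_right hgam.1 hp.2.le).trans_lt hgam_lt
  have hgd : gam * (p + (1 - p) * M) ≤ 1 := (le_div_iff₀ (by linarith)).1 hgam.2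
  exact ⟨le_mul_div_one_sub_mul_of_le_threshold hgp hgd hL₂,
    majorityUpdate_one hgam_lt.ne (by linarith)⟩

theorem stmt17 (M p gam : ℝ) (hM : 0 < M) (hp : p ∈ Ioo (1/2 : ℝ) 1)
    (hgam : gam ∈ Icc (0:ℝ) (1 / (p + (1 - p) * M))) :
    ∀ L : ℝ, (M + 1) / 2 ≤ L → L ≤ M - 1 →
      L ≤ (1 - gam) * M / (1 - gam * p) ∧
      p + (1 - p) * ((1 - gam) * ((1:ℝ) / L))
          / ((1 - gam) * ((1:ℝ) / L) + gam * ((1 - (1:ℝ)) / (M - L))) = 1 :=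
  stmt17_general M p gam hp hgam
end
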